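/- arXiv:1712.03270 — 2 statements merged into one kernel-verified Lean document; each statement's English description precedes it below -/
import Mathlib

section
/- Each of the topologies Z^T, Z and Z^S on Minkowski space is first countable: for every point x ∈ M, the neighbourhood filter of x in each of these topologies admits a countable basis (given by the basic sets centred at x with radii 1/n). -/
noncomputable section

open TopologicalSpace Filter

/-- Minkowski space `M = ℝ × ℝ³`. -/
abbrev Mink : Type := ℝ × EuclideanSpace ℝ (Fin 3)

/-- The Euclidean (product) topology on `M`. -/
def TE : TopologicalSpace Mink := inferInstance

/-- Time difference Δt(x,y). -/
def dtime (x y : Mink) : ℝ := y.1 - x.1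

/-- Spatial distance Δr(x,y). -/
def dspace (x y : Mink) : ℝ := ‖y.2 - x.2‖

/-- Chronological order `x ≪ y`. -/
def Chron (x y : Mink) : Prop := dspace x y < dtime x y

/-- Causal order `x ≺ y`. -/
def Causal (x y : Mink) : Prop := dspace x y ≤ dtime x y

/-- Euclidean open ball of radius ε about x. -/
def eball (x : Mink) (ε : ℝ) : Set Mink :=
  {y | Real.sqrt ((y.1 - x.1) ^ 2 + ‖y.2 - x.2‖ ^ 2) < ε}

/-- Time cone `C^T(x)`. -/
def timeCone (x : Mink) : Set Mink := {x} ∪ {y | Chron x y ∨ Chron y x}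

/-- Space cone `C^S(x)`. -/
def spaceCone (x : Mink) : Set Mink := {x} ∪ {y | |dtime x y| < dspace x y}

/-- Light cone `C^L(x)`. -/
def lightCone (x : Mink) : Set Mink := {y | y ≠ x ∧ |dtime x y| = dspace x y}

/-- Causal cone `C^J(x)`. -/
def causalCone (x : Mink) : Set Mink := {x} ∪ {y | Causal x y ∨ Causal y x}

/-- Closed space cone `K^S(x)` (space cone together with the light cone). -/
def closedSpaceCone (x : Mink) : Set Mink := {x} ∪ {y | |dtime x y| ≤ dspace x y}

/-- Bounded time cones, the defining family of `Z^T`. -/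
def BasisT : Set (Set Mink) := {S | ∃ x ε, 0 < ε ∧ S = timeCone x ∩ eball x ε}

/-- Bounded space cones, the defining family of `Z^S`. -/
def BasisS : Set (Set Mink) := {S | ∃ x ε, 0 < ε ∧ S = spaceCone x ∩ eball x ε}

/-- Balls with the light cone of the centre removed, the defining family of `Z`. -/
def BasisZ : Set (Set Mink) := {S | ∃ x ε, 0 < ε ∧ S = eball x ε \ lightCone x}

/-- Zeeman's topology `Z^T` (the Minkowski analogue of the path topology). -/
def ZT : TopologicalSpace Mink := TopologicalSpace.generateFrom BasisT

/-- The topology `Z^S`. -/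
def ZS : TopologicalSpace Mink := TopologicalSpace.generateFrom BasisS

/-- The topology `Z`. -/
def Ztop : TopologicalSpace Mink := TopologicalSpace.generateFrom BasisZ

def Jplus (x : Mink) : Set Mink := {y | Causal x y}
def Jminus (x : Mink) : Set Mink := {y | Causal y x}
def Nplus (x : Mink) : Set Mink := {y | y ≠ x ∧ dtime x y = dspace x y}
def Nminus (x : Mink) : Set Mink := {y | y ≠ x ∧ -dtime x y = dspace x y}

/-- The interval topology `T^tc` whose subbasic open sets are time cones. -/
def Ttc : TopologicalSpace Mink :=
  TopologicalSpace.generateFrom {S | ∃ x, S = timeCone x}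

/-- The interval topology `T^≪` of the irreflexive causal order. -/
def Tll : TopologicalSpace Mink :=
  TopologicalSpace.generateFrom
    ({S | ∃ x, S = Set.univ \ (Jplus x \ {x})} ∪ {S | ∃ x, S = Set.univ \ (Jminus x \ {x})})

/-- The interval topology `T^→` of irreflexive horismos. -/
def Thor : TopologicalSpace Mink :=
  TopologicalSpace.generateFrom
    ({S | ∃ x, S = Set.univ \ Nplus x} ∪ {S | ∃ x, S = Set.univ \ Nminus x})

/-- The topology `(Z^T)′` generated by bounded causal cones. -/
def ZT' : TopologicalSpace Mink :=
  TopologicalSpace.generateFrom {S | ∃ x ε, 0 < ε ∧ S = causalCone x ∩ eball x ε}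

/-- The topology `(Z^S)′` generated by bounded closed space cones. -/
def ZS' : TopologicalSpace Mink :=
  TopologicalSpace.generateFrom {S | ∃ x ε, 0 < ε ∧ S = closedSpaceCone x ∩ eball x ε}

/-- The topology `(T^tc)′` generated by causal cones. -/
def Ttc' : TopologicalSpace Mink :=
  TopologicalSpace.generateFrom {S | ∃ x, S = causalCone x}

/-- The topology `(T^≪)′` generated by closed space cones. -/
def Tll' : TopologicalSpace Mink :=
  TopologicalSpace.generateFrom {S | ∃ x, S = closedSpaceCone x}

/-- An endless causal curve. -/
def EndlessCausalCurve (γ : ℝ → Mink) : Prop :=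
  Continuous γ ∧ (∀ s t : ℝ, s < t → Causal (γ s) (γ t) ∧ γ s ≠ γ t) ∧
    (∀ c : ℝ, ∃ t, c < (γ t).1) ∧ (∀ c : ℝ, ∃ t, (γ t).1 < c)

/-- `γ` is a `T`-limit curve of the sequence `γs` of curves. -/
def IsLimitCurve (T : TopologicalSpace Mink) (γ : ℝ → Mink) (γs : ℕ → ℝ → Mink) : Prop :=
  ∃ nk : ℕ → ℕ, StrictMono nk ∧
    ∀ p ∈ Set.range γ, ∃ pk : ℕ → Mink,
      (∀ k, pk k ∈ Set.range (γs (nk k))) ∧ Filter.Tendsto pk Filter.atTop (@nhds Mink T p)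

/-! Each of the three cones `C(y)` (time cone, space cone, complement of the light cone) is `{y}`
together with a Euclidean-open set, so a basic set `C(y) ∩ B_ε(y)` is a Euclidean neighbourhood of
each of its points other than `y`. Hence the neighbourhood filter of `x` in the topology generated
by the bounded cones is the Euclidean neighbourhood filter of `x` restricted to `C(x)`, and the
Euclidean balls of radius `1/n` about `x` cut it down to a countable basis. -/

open Set Topology

section BoundedCones

variable {X ι : Type*} [TopologicalSpace X]

def boundedCones (p : ι → Prop) (K : X → Set X) (B : X → ι → Set X) : Set (Set X) :=
  {S | ∃ x i, p i ∧ S = K x ∩ B x i}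

theorem nhds_generateFrom_boundedCones {p : ι → Prop} {K : X → Set X} {B : X → ι → Set X}
    (hB : ∀ y, (𝓝 y).HasBasis p (B y)) (hBo : ∀ y i, p i → IsOpen (B y i))
    (hKself : ∀ y, y ∈ K y) (hK : ∀ y, ∀ z ∈ K y, z ≠ y → K y ∈ 𝓝 z) (x : X) :
    @nhds X (generateFrom (boundedCones p K B)) x = 𝓟 (K x) ⊓ 𝓝 x := by
  apply le_antisymm
  · rw [((hB x).principal_inf (K x)).ge_iff]
    intro i hi
    exact @IsOpen.mem_nhds _ (generateFrom _) _ _ (isOpen_generateFrom_of_mem ⟨x, i, hi, rfl⟩)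
      ⟨hKself x, mem_of_mem_nhds ((hB x).mem_of_mem hi)⟩
  · rw [nhds_generateFrom]
    refine le_iInf₂ ?_
    rintro _ ⟨hxS, y, i, hi, rfl⟩
    obtain ⟨hxK, hxB⟩ := hxS
    have hB' : B y i ∈ 𝓝 x := (hBo y i hi).mem_nhds hxB
    rcases eq_or_ne x y with rfl | hne
    · exact le_principal_iff.2 (inter_mem_inf (mem_principal_self _) hB')
    · exact le_principal_iff.2 (mem_inf_of_right (inter_mem (hK y x hxK hne) hB'))

theorem singleton_union_mem_nhds {s : Set X} {x y : X} (hs : IsOpen s) (hx : x ∈ {y} ∪ s)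
    (hxy : x ≠ y) : {y} ∪ s ∈ 𝓝 x :=
  mem_of_superset (hs.mem_nhds (hx.resolve_left hxy)) subset_union_right

end BoundedCones

theorem eball_eq_preimage_ball (x : Mink) (ε : ℝ) :
    eball x ε = WithLp.toLp 2 ⁻¹' Metric.ball (WithLp.toLp 2 x) ε := by
  ext y
  rw [mem_preimage, Metric.mem_ball, WithLp.prod_dist_eq_of_L2]
  simp [eball, dist_eq_norm, sq_abs]

theorem nhds_eq_comap_toLp (x : Mink) :
    𝓝 x = comap (WithLp.toLp 2) (𝓝 (WithLp.toLp 2 x)) :=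
  (WithLp.homeomorphProd 2 ℝ (EuclideanSpace ℝ (Fin 3))).symm.nhds_eq_comap x

theorem nhds_basis_eball (x : Mink) : (𝓝 x).HasBasis (fun ε : ℝ => 0 < ε) (eball x) := by
  rw [nhds_eq_comap_toLp]
  simpa only [← eball_eq_preimage_ball] using
    (Metric.nhds_basis_ball (x := WithLp.toLp 2 x)).comap (WithLp.toLp 2)

theorem nhds_basis_eball_one_div (x : Mink) :
    (𝓝 x).HasBasis (fun n : ℕ => 0 < n) (fun n => eball x (1 / n)) := by
  rw [nhds_eq_comap_toLp]
  simpa only [← eball_eq_preimage_ball] using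
    (Metric.nhds_basis_ball_inv_nat_pos (x := WithLp.toLp 2 x)).comap (WithLp.toLp 2)

theorem isOpen_eball (x : Mink) (ε : ℝ) : IsOpen (eball x ε) := by
  rw [eball_eq_preimage_ball]
  exact Metric.isOpen_ball.preimage (WithLp.homeomorphProd 2 ℝ _).symm.continuous

@[fun_prop]
theorem Continuous.dtime {α : Type*} [TopologicalSpace α] {f g : α → Mink} (hf : Continuous f)
    (hg : Continuous g) : Continuous fun a => dtime (f a) (g a) := by
  unfold _root_.dtime; fun_prop

@[fun_prop]
theorem Continuous.dspace {α : Type*} [TopologicalSpace α] {f g : α → Mink} (hf : Continuous f)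
    (hg : Continuous g) : Continuous fun a => dspace (f a) (g a) := by
  unfold _root_.dspace; fun_prop

theorem timeCone_mem_nhds {x y : Mink} (hx : x ∈ timeCone y) (hxy : x ≠ y) :
    timeCone y ∈ 𝓝 x := by
  have hopen : IsOpen {z | Chron y z ∨ Chron z y} := by
    simp only [Chron, ofPred_or]
    exact (isOpen_lt (by fun_prop) (by fun_prop)).union (isOpen_lt (by fun_prop) (by fun_prop))
  exact singleton_union_mem_nhds hopen hx hxy

theorem spaceCone_mem_nhds {x y : Mink} (hx : x ∈ spaceCone y) (hxy : x ≠ y) :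
    spaceCone y ∈ 𝓝 x :=
  singleton_union_mem_nhds (isOpen_lt (by fun_prop) (by fun_prop)) hx hxy

theorem compl_lightCone (y : Mink) :
    (lightCone y)ᶜ = {y} ∪ {x | |dtime y x| ≠ dspace y x} := by
  ext x
  by_cases hxy : x = y <;> simp [lightCone, hxy]

theorem compl_lightCone_mem_nhds {x y : Mink} (hx : x ∈ (lightCone y)ᶜ) (hxy : x ≠ y) :
    (lightCone y)ᶜ ∈ 𝓝 x := by
  rw [compl_lightCone] at hx ⊢
  exact singleton_union_mem_nhds (isOpen_ne_fun (by fun_prop) (by fun_prop)) hx hxy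

theorem basisZ_eq_boundedCones : BasisZ = boundedCones (0 < ·) (fun y => (lightCone y)ᶜ) eball := by
  simp only [BasisZ, boundedCones, sdiff_eq_compl_inter]

theorem nhds_generateFrom_boundedCones_eball {K : Mink → Set Mink} (hKself : ∀ y, y ∈ K y)
    (hK : ∀ y, ∀ x ∈ K y, x ≠ y → K y ∈ 𝓝 x) (x : Mink) :
    (@nhds Mink (generateFrom (boundedCones (0 < ·) K eball)) x).HasBasis (fun n : ℕ => 0 < n)
      (fun n => K x ∩ eball x (1 / n)) := by
  rw [nhds_generateFrom_boundedCones nhds_basis_eball (fun y ε _ => isOpen_eball y ε) hKself hK]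
  exact (nhds_basis_eball_one_div x).principal_inf (K x)

/-- Each of `Z^T`, `Z`, `Z^S` is first countable: at every point the neighbourhood filter
has a countable basis given by the basic sets centred at that point with radii `1/n`. -/
theorem ZT_Z_ZS_first_countable (x : Mink) :
    (@nhds Mink ZT x).HasBasis (fun n : ℕ => 0 < n)
      (fun n : ℕ => timeCone x ∩ eball x (1 / (n : ℝ))) ∧
    (@nhds Mink Ztop x).HasBasis (fun n : ℕ => 0 < n)
      (fun n : ℕ => eball x (1 / (n : ℝ)) \ lightCone x) ∧
    (@nhds Mink ZS x).HasBasis (fun n : ℕ => 0 < n)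
      (fun n : ℕ => spaceCone x ∩ eball x (1 / (n : ℝ))) := by
  have hT := nhds_generateFrom_boundedCones_eball (K := timeCone) (fun _ => Or.inl rfl)
    (fun _ _ => timeCone_mem_nhds) x
  have hS := nhds_generateFrom_boundedCones_eball (K := spaceCone) (fun _ => Or.inl rfl)
    (fun _ _ => spaceCone_mem_nhds) x
  have hZ := nhds_generateFrom_boundedCones_eball (K := fun y => (lightCone y)ᶜ)
    (fun _ hy => hy.1 rfl) (fun _ _ => compl_lightCone_mem_nhds) x
  rw [← basisZ_eq_boundedCones] at hZ
  simp only [← sdiff_eq_compl_inter] at hZ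
  exact ⟨hT, hZ, hS⟩
end
end

section
/- The topology (Z^T)′ on Minkowski space equals the intersection topology of (T^tc)′ and the Euclidean topology T_E, i.e. (Z^T)′ is the topology generated by the family {V ∩ U : V is (T^tc)′-open, U is T_E-open}. -/
noncomputable section

open TopologicalSpace Filter

lemma genOpen_iUnion {ι : Sort*} {g : Set (Set Mink)} {s : ι → Set Mink}
    (h : ∀ i, TopologicalSpace.GenerateOpen g (s i)) :
    TopologicalSpace.GenerateOpen g (⋃ i, s i) := by
  rw [← Set.sUnion_range]
  exact .sUnion _ (by rintro _ ⟨i, rfl⟩; exact h i)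

lemma eball_isOpen (x : Mink) (ε : ℝ) : TE.IsOpen (eball x ε) := by
  have hc : Continuous fun y : Mink =>
      Real.sqrt ((y.1 - x.1) ^ 2 + ‖y.2 - x.2‖ ^ 2) := by fun_prop
  have : eball x ε = (fun y : Mink =>
      Real.sqrt ((y.1 - x.1) ^ 2 + ‖y.2 - x.2‖ ^ 2)) ⁻¹' Set.Iio ε := rfl
  rw [this]
  exact isOpen_Iio.preimage hc

lemma eball_subset_ball (x : Mink) (ε : ℝ) : eball x ε ⊆ Metric.ball x ε := by
  intro y hy
  have hy' : Real.sqrt ((y.1 - x.1) ^ 2 + ‖y.2 - x.2‖ ^ 2) < ε := hy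
  have h1 : |y.1 - x.1| ≤ Real.sqrt ((y.1 - x.1) ^ 2 + ‖y.2 - x.2‖ ^ 2) := by
    rw [← Real.sqrt_sq_eq_abs]
    exact Real.sqrt_le_sqrt (le_add_of_nonneg_right (sq_nonneg _))
  have h2 : ‖y.2 - x.2‖ ≤ Real.sqrt ((y.1 - x.1) ^ 2 + ‖y.2 - x.2‖ ^ 2) := by
    have h := Real.sqrt_le_sqrt (le_add_of_nonneg_left (sq_nonneg (y.1 - x.1)) :
      ‖y.2 - x.2‖ ^ 2 ≤ (y.1 - x.1) ^ 2 + ‖y.2 - x.2‖ ^ 2)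
    rwa [Real.sqrt_sq (norm_nonneg _)] at h
  have : dist y x < ε := by
    rw [Prod.dist_eq, Real.dist_eq, dist_eq_norm]
    exact max_lt (lt_of_le_of_lt h1 hy') (lt_of_le_of_lt h2 hy')
  exact this

lemma mem_eball_self (x : Mink) {ε : ℝ} (hε : 0 < ε) : x ∈ eball x ε := by
  simp only [eball, Set.mem_setOf_eq, sub_self, norm_zero]
  simpa using hε

lemma mem_causalCone_self (x : Mink) : x ∈ causalCone x := Or.inl rfl

lemma causalCone_eq_iUnion (x : Mink) :
    causalCone x = ⋃ n : ℕ, causalCone x ∩ eball x (n + 1) := by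
  ext y
  constructor
  · intro hy
    obtain ⟨n, hn⟩ := exists_nat_gt (Real.sqrt ((y.1 - x.1) ^ 2 + ‖y.2 - x.2‖ ^ 2))
    exact Set.mem_iUnion.mpr ⟨n, hy, lt_of_lt_of_le hn (by linarith)⟩
  · intro hy
    obtain ⟨n, hn, _⟩ := Set.mem_iUnion.mp hy
    exact hn

/-- `(Z^T)′` equals the intersection topology of `(T^tc)′` and the Euclidean topology. -/
theorem ZT'_eq_intersection_topology :
    ZT' = TopologicalSpace.generateFrom
      {S : Set Mink | ∃ V U : Set Mink, Ttc'.IsOpen V ∧ TE.IsOpen U ∧ S = V ∩ U} := by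
  apply le_antisymm
  · -- ZT' ≤ generated: every generator V ∩ U is ZT'-open
    apply le_generateFrom
    rintro S ⟨V, U, hV, hU, rfl⟩
    -- first: every Ttc'-open set is ZT'-open
    have hTtc : ∀ W : Set Mink, Ttc'.IsOpen W → ZT'.IsOpen W := by
      intro W hW
      induction hW with
      | basic W hW =>
        obtain ⟨x, rfl⟩ := hW
        rw [causalCone_eq_iUnion x]
        exact genOpen_iUnion fun n =>
          TopologicalSpace.GenerateOpen.basic _ ⟨x, n + 1, by positivity, rfl⟩
      | univ => exact TopologicalSpace.GenerateOpen.univ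
      | inter _ _ _ _ ih1 ih2 => exact TopologicalSpace.GenerateOpen.inter _ _ ih1 ih2
      | sUnion _ _ ih => exact TopologicalSpace.GenerateOpen.sUnion _ ih
    -- second: every TE-open set is ZT'-open
    have hTE : ∀ W : Set Mink, TE.IsOpen W → ZT'.IsOpen W := by
      intro W hW
      have key : ∀ y ∈ W, ∃ ε : ℝ, 0 < ε ∧ eball y ε ⊆ W := by
        intro y hy
        obtain ⟨ε, hε, hball⟩ := Metric.isOpen_iff.mp hW y hy
        exact ⟨ε, hε, fun z hz => hball (eball_subset_ball y ε hz)⟩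
      choose! ε hε hsub using key
      have : W = ⋃ y ∈ W, causalCone y ∩ eball y (ε y) := by
        ext z
        constructor
        · intro hz
          exact Set.mem_biUnion hz ⟨mem_causalCone_self z, mem_eball_self z (hε z hz)⟩
        · intro hz
          obtain ⟨y, hy, _, hz2⟩ := Set.mem_iUnion₂.mp hz
          exact hsub y hy hz2
      rw [this]
      exact genOpen_iUnion fun y =>
        genOpen_iUnion fun hy =>
          TopologicalSpace.GenerateOpen.basic _ ⟨y, ε y, hε y hy, rfl⟩
    exact TopologicalSpace.GenerateOpen.inter _ _ (hTtc V hV) (hTE U hU)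
  · -- generated ≤ ZT': each ZT' generator is of the form V ∩ U
    apply le_generateFrom
    rintro S ⟨x, ε, hε, rfl⟩
    exact TopologicalSpace.GenerateOpen.basic _
      ⟨causalCone x, eball x ε,
        TopologicalSpace.GenerateOpen.basic _ ⟨x, rfl⟩, eball_isOpen x ε, rfl⟩
end
end
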